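/- Any canonical solution to the g2s hardness instance—one where every source broadcasts only to terminals of its own set—has cost exactly L·(number of sets used) + (funnel cost ≥ n), and any solution in which some source broadcasts to a terminal outside its set has cost at least M. Therefore if M > m·L + n, every solution of cost at most m·L + n is canonical. -/
import Mathlib


open Finset

/-- Canonical-solution dichotomy for the g2s hardness instance. A solution assigns
each element `e` a source `σ e` broadcasting at radius `ρ (σ e)` at least the
broadcast cost (`L` if `e ∈ X (σ e)`, otherwise `M`), and pays funnel cost `fc ≥ n`.
Then: a canonical solution (every source broadcasts only to terminals of its own set,
at radius exactly `L`) has cost exactly `L·(number of sets used) + fc`; any solution in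
which some source broadcasts to a terminal outside its set has cost at least `M`; and
if `M > m·L + n`, every solution of cost at most `m·L + n` is canonical. -/
theorem g2s_canonical_dichotomy (n m : ℕ) (El : Type*) [Fintype El] [DecidableEq El]
    (hn : Fintype.card El = n)
    (X : Fin m → Finset El) (L M : ℝ) (hL : 0 ≤ L)
    (σ : El → Fin m) (ρ : Fin m → ℝ) (fc : ℝ)
    (hfeas : ∀ e, (if e ∈ X (σ e) then L else M) ≤ ρ (σ e))
    (hρ : ∀ i, 0 ≤ ρ i) (hfc : (n : ℝ) ≤ fc) :
    ((∀ e, e ∈ X (σ e)) → (∀ i ∈ Finset.image σ Finset.univ, ρ i = L) →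
      (∑ i ∈ Finset.image σ Finset.univ, ρ i) + fc
        = L * (Finset.image σ Finset.univ).card + fc) ∧
    ((∃ e, e ∉ X (σ e)) →
      M ≤ (∑ i ∈ Finset.image σ Finset.univ, ρ i) + fc) ∧
    ((m : ℝ) * L + n < M →
      (∑ i ∈ Finset.image σ Finset.univ, ρ i) + fc ≤ (m : ℝ) * L + n →
      ∀ e, e ∈ X (σ e)) := by
  have key : ∀ e, e ∉ X (σ e) → M ≤ (∑ i ∈ Finset.image σ Finset.univ, ρ i) + fc := by
    intro e he
    have h1 : M ≤ ρ (σ e) := by have := hfeas e; simpa [he] using this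
    have h2 : ρ (σ e) ≤ ∑ i ∈ Finset.image σ Finset.univ, ρ i :=
      Finset.single_le_sum (fun i _ => hρ i) (Finset.mem_image_of_mem σ (Finset.mem_univ e))
    have h3 : (0:ℝ) ≤ fc := le_trans (by positivity) hfc
    linarith
  refine ⟨fun _ hρL => ?_, fun ⟨e, he⟩ => key e he, fun hM hle e => ?_⟩
  · rw [Finset.sum_congr rfl hρL, Finset.sum_const, nsmul_eq_mul, mul_comm]
  · by_contra he
    exact absurd (le_trans (key e he) hle) (not_le.mpr hM)
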